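/- arXiv:1401.6816 — 2 statements merged into one kernel-verified Lean document; each statement's English description precedes it below -/
import Mathlib

section
/- If a strongly regular graph Γ is such that for every vertex x both subconstituents Γ₁(x) (induced on neighbours of x) and Γ₂(x) (induced on vertices at distance 2 from x) are strongly regular with parameters independent of x, then Γ is 3-isoregular; conversely, a 3-isoregular graph has this property. -/
set_option linter.unusedSectionVars false
set_option maxHeartbeats 1000000

/-- The number of common neighbours of a set `S` of vertices. -/
noncomputable def commonValency {V : Type*} [Fintype V] (G : SimpleGraph V)
    (S : Finset V) : ℕ :=
  Set.ncard {v : V | ∀ x ∈ S, G.Adj x v}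

/-- Two vertex subsets induce isomorphic subgraphs. -/
def IndIso {V : Type*} (G : SimpleGraph V) (S T : Finset V) : Prop :=
  ∃ φ : {x // x ∈ S} ≃ {x // x ∈ T},
    ∀ a b : {x // x ∈ S}, G.Adj a.1 b.1 ↔ G.Adj (φ a).1 (φ b).1

/-- `G` is `k`-isoregular. -/
def IsIsoregular {V : Type*} [Fintype V] (G : SimpleGraph V) (k : ℕ) : Prop :=
  ∀ S T : Finset V, S.card ≤ k → T.card ≤ k → IndIso G S T →
    commonValency G S = commonValency G T

instance {V : Type*} (G : SimpleGraph V) [DecidableRel G.Adj] (s : Set V) :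
    DecidableRel (G.induce s).Adj :=
  fun a b => inferInstanceAs (Decidable (G.Adj a.1 b.1))

section Aux
open SimpleGraph
variable {V : Type*} [Fintype V] [DecidableEq V] {G : SimpleGraph V} [DecidableRel G.Adj]

lemma aux_card_common (s : Set V) [DecidablePred (· ∈ s)] (a b : ↥s) :
    Nat.card ((G.induce s).commonNeighbors a b) =
      Set.ncard {v : V | v ∈ s ∧ G.Adj ↑a v ∧ G.Adj ↑b v} := by
  rw [← Nat.card_coe_set_eq]
  exact Nat.card_congr <| (Equiv.subtypeEquivRight (fun w => by
      simp [mem_commonNeighbors])).trans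
    (Equiv.subtypeSubtypeEquivSubtypeInter (· ∈ s) (fun v => G.Adj ↑a v ∧ G.Adj ↑b v))

lemma aux_degree (s : Set V) [DecidablePred (· ∈ s)] (a : ↥s) :
    (G.induce s).degree a = Set.ncard {v : V | v ∈ s ∧ G.Adj ↑a v} := by
  rw [← card_neighborSet_eq_degree, ← Nat.card_eq_fintype_card, ← Nat.card_coe_set_eq]
  exact Nat.card_congr <| (Equiv.subtypeEquivRight (fun w => by
      simp [mem_neighborSet])).trans
    (Equiv.subtypeSubtypeEquivSubtypeInter (· ∈ s) (fun v => G.Adj ↑a v))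

lemma aux_common (a b : V) :
    Fintype.card (G.commonNeighbors a b) = Set.ncard {v : V | G.Adj a v ∧ G.Adj b v} := by
  rw [← Nat.card_eq_fintype_card, ← Nat.card_coe_set_eq]
  exact Nat.card_congr (Equiv.subtypeEquivRight (fun w => by simp [mem_commonNeighbors]))

lemma aux_split (x : V) (P : V → Prop) (hx : ¬ P x) :
    Set.ncard {v : V | P v} =
      Set.ncard {v : V | G.Adj x v ∧ P v} +
      Set.ncard {v : V | (v ≠ x ∧ ¬ G.Adj x v) ∧ P v} := by
  rw [← Set.ncard_union_eq ?_ (Set.toFinite _) (Set.toFinite _)]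
  · congr 1
    ext w
    simp only [Set.mem_union, Set.mem_setOf_eq]
    constructor
    · intro hw
      by_cases h : G.Adj x w
      · exact Or.inl ⟨h, hw⟩
      · refine Or.inr ⟨⟨?_, h⟩, hw⟩
        rintro rfl; exact hx hw
    · rintro (⟨_, hw⟩ | ⟨_, hw⟩) <;> exact hw
  · rw [Set.disjoint_left]
    rintro w ⟨hw, _⟩ ⟨⟨_, hw'⟩, _⟩
    exact hw' hw

lemma cv_triple_set (x y z : V) :
    commonValency G {x, y, z} =
      Set.ncard {v : V | G.Adj x v ∧ G.Adj y v ∧ G.Adj z v} := by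
  unfold commonValency
  congr 1
  ext w
  simp [Finset.forall_mem_insert]

lemma cv_pair_set (x y : V) :
    commonValency G {x, y} = Fintype.card (G.commonNeighbors x y) := by
  rw [aux_common]
  unfold commonValency
  congr 1
  ext w
  simp [Finset.forall_mem_insert]

lemma cv_single (x : V) : commonValency G {x} = G.degree x := by
  rw [← card_neighborSet_eq_degree, ← Nat.card_eq_fintype_card, Nat.card_coe_set_eq]
  unfold commonValency
  congr 1
  ext w
  simp [mem_neighborSet]

/-- C1 : both `y z` neighbours of `x`. -/
lemma aux_C1 {x : V} (a b : ↥(G.neighborSet x)) :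
    Nat.card ((G.induce (G.neighborSet x)).commonNeighbors a b) =
      commonValency G {x, ↑a, ↑b} := by
  rw [aux_card_common, cv_triple_set]
  rfl

/-- C2 : both `y z` non-neighbours of `x`. -/
lemma aux_C2 {x : V} (a b : ↥{w : V | w ≠ x ∧ ¬ G.Adj x w}) :
    commonValency G {x, ↑a, ↑b} +
      Nat.card ((G.induce {w : V | w ≠ x ∧ ¬ G.Adj x w}).commonNeighbors a b) =
      Fintype.card (G.commonNeighbors ↑a ↑b) := by
  rw [aux_card_common, cv_triple_set, aux_common]
  rw [aux_split (G := G) x (fun v => G.Adj ↑a v ∧ G.Adj ↑b v)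
    (fun h => a.2.2 (G.adj_symm h.1))]
  rfl

/-- D2 : degree in the second subconstituent. -/
lemma aux_D2 {x : V} (a : ↥{w : V | w ≠ x ∧ ¬ G.Adj x w}) :
    (G.induce {w : V | w ≠ x ∧ ¬ G.Adj x w}).degree a +
      Fintype.card (G.commonNeighbors x ↑a) = G.degree ↑a := by
  rw [aux_degree, aux_common, ← card_neighborSet_eq_degree, ← Nat.card_eq_fintype_card,
    Nat.card_coe_set_eq]
  have h0 : (G.neighborSet ↑a : Set V) = {v : V | G.Adj ↑a v} := rfl
  rw [h0, aux_split (G := G) x (fun v => G.Adj ↑a v) (fun h => a.2.2 (G.adj_symm h))]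
  rw [Nat.add_comm]
  rfl

/-- cardinality of the second subconstituent. -/
lemma aux_V2 (x : V) :
    Fintype.card ↥{w : V | w ≠ x ∧ ¬ G.Adj x w} + G.degree x + 1 = Fintype.card V := by
  rw [← Nat.card_eq_fintype_card (α := ↥{w : V | w ≠ x ∧ ¬ G.Adj x w}),
    Nat.card_coe_set_eq]
  have h1 : Set.ncard {v : V | v ≠ x} =
      Set.ncard {v : V | G.Adj x v ∧ v ≠ x} +
      Set.ncard {v : V | (v ≠ x ∧ ¬ G.Adj x v) ∧ v ≠ x} :=
    aux_split (G := G) x (fun v => v ≠ x) (fun h => h rfl)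
  have h2 : {v : V | G.Adj x v ∧ v ≠ x} = {v : V | G.Adj x v} := by
    ext w
    simp only [Set.mem_setOf_eq, and_iff_left_iff_imp]
    exact fun h => (G.ne_of_adj h).symm
  have h3 : {v : V | (v ≠ x ∧ ¬ G.Adj x v) ∧ v ≠ x} = {v : V | v ≠ x ∧ ¬ G.Adj x v} := by
    ext w
    simp only [Set.mem_setOf_eq, and_iff_left_iff_imp]
    tauto
  have h4 : Set.ncard {v : V | G.Adj x v} = G.degree x := by
    rw [← card_neighborSet_eq_degree, ← Nat.card_eq_fintype_card, Nat.card_coe_set_eq]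
    rfl
  have h5 : Set.ncard {v : V | v ≠ x} + 1 = Fintype.card V := by
    have hu : (Set.univ : Set V) = insert x {v : V | v ≠ x} := by
      ext w; by_cases hw : w = x <;> simp [hw]
    have h6 : Set.ncard (Set.univ : Set V) = Fintype.card V := by
      rw [← Nat.card_coe_set_eq, Nat.card_eq_fintype_card]
      exact Fintype.card_congr (Equiv.Set.univ V)
    rw [← h6, hu, Set.ncard_insert_of_notMem (by simp) (Set.toFinite _)]
  rw [h2, h3] at h1
  omega

lemma triple_perm1 (x y z : V) : ({x, y, z} : Finset V) = {y, x, z} :=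
  Finset.insert_comm x y {z}

lemma triple_perm2 (x y z : V) : ({x, y, z} : Finset V) = {z, x, y} := by
  ext a
  simp only [Finset.mem_insert, Finset.mem_singleton]
  tauto

lemma triple_card {x y z : V} (hxy : x ≠ y) (hxz : x ≠ z) (hyz : y ≠ z) :
    ({x, y, z} : Finset V).card = 3 :=
  Finset.card_eq_three.mpr ⟨x, y, z, hxy, hxz, hyz, rfl⟩

lemma indIso_triple {x y z x' y' z' : V}
    (hxy : x ≠ y) (hxz : x ≠ z) (hyz : y ≠ z)
    (hxy' : x' ≠ y') (hxz' : x' ≠ z') (hyz' : y' ≠ z')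
    (h1 : G.Adj x y ↔ G.Adj x' y') (h2 : G.Adj x z ↔ G.Adj x' z')
    (h3 : G.Adj y z ↔ G.Adj y' z') :
    IndIso G {x, y, z} {x', y', z'} := by
  have mx : x ∈ ({x, y, z} : Finset V) := by simp
  have my : y ∈ ({x, y, z} : Finset V) := by simp
  have mz : z ∈ ({x, y, z} : Finset V) := by simp
  have mx' : x' ∈ ({x', y', z'} : Finset V) := by simp
  have my' : y' ∈ ({x', y', z'} : Finset V) := by simp
  have mz' : z' ∈ ({x', y', z'} : Finset V) := by simp
  have memS : ∀ a : {w // w ∈ ({x, y, z} : Finset V)}, a.1 = x ∨ a.1 = y ∨ a.1 = z := by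
    rintro ⟨a, ha⟩
    simpa using ha
  have memT : ∀ a : {w // w ∈ ({x', y', z'} : Finset V)}, a.1 = x' ∨ a.1 = y' ∨ a.1 = z' := by
    rintro ⟨a, ha⟩
    simpa using ha
  let f : {w // w ∈ ({x, y, z} : Finset V)} → {w // w ∈ ({x', y', z'} : Finset V)} :=
    fun a => if a.1 = x then ⟨x', mx'⟩ else if a.1 = y then ⟨y', my'⟩ else ⟨z', mz'⟩
  let g : {w // w ∈ ({x', y', z'} : Finset V)} → {w // w ∈ ({x, y, z} : Finset V)} :=
    fun a => if a.1 = x' then ⟨x, mx⟩ else if a.1 = y' then ⟨y, my⟩ else ⟨z, mz⟩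
  have fx : ∀ a, a.1 = x → f a = ⟨x', mx'⟩ := by
    intro a ha; simp only [f, ha, if_pos]
  have fy : ∀ a, a.1 = y → f a = ⟨y', my'⟩ := by
    intro a ha; simp only [f, ha]
    rw [if_neg hxy.symm]; simp
  have fz : ∀ a, a.1 = z → f a = ⟨z', mz'⟩ := by
    intro a ha; simp only [f, ha]
    rw [if_neg hxz.symm, if_neg hyz.symm]
  have gx : ∀ a, a.1 = x' → g a = ⟨x, mx⟩ := by
    intro a ha; simp only [g, ha, if_pos]
  have gy : ∀ a, a.1 = y' → g a = ⟨y, my⟩ := by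
    intro a ha; simp only [g, ha]
    rw [if_neg hxy'.symm]; simp
  have gz : ∀ a, a.1 = z' → g a = ⟨z, mz⟩ := by
    intro a ha; simp only [g, ha]
    rw [if_neg hxz'.symm, if_neg hyz'.symm]
  refine ⟨⟨f, g, ?_, ?_⟩, ?_⟩
  · intro a
    rcases memS a with h | h | h
    · rw [fx a h, gx _ rfl]; exact Subtype.ext h.symm
    · rw [fy a h, gy _ rfl]; exact Subtype.ext h.symm
    · rw [fz a h, gz _ rfl]; exact Subtype.ext h.symm
  · intro a
    rcases memT a with h | h | h
    · rw [gx a h, fx _ rfl]; exact Subtype.ext h.symm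
    · rw [gy a h, fy _ rfl]; exact Subtype.ext h.symm
    · rw [gz a h, fz _ rfl]; exact Subtype.ext h.symm
  · intro a b
    show G.Adj a.1 b.1 ↔ G.Adj (f a).1 (f b).1
    have hxx : G.Adj x x ↔ G.Adj x' x' := by simp
    have hyy : G.Adj y y ↔ G.Adj y' y' := by simp
    have hzz : G.Adj z z ↔ G.Adj z' z' := by simp
    have h1' : G.Adj y x ↔ G.Adj y' x' := by rw [G.adj_comm, h1, G.adj_comm]
    have h2' : G.Adj z x ↔ G.Adj z' x' := by rw [G.adj_comm, h2, G.adj_comm]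
    have h3' : G.Adj z y ↔ G.Adj z' y' := by rw [G.adj_comm, h3, G.adj_comm]
    rcases memS a with ha | ha | ha <;> rcases memS b with hb | hb | hb <;>
      [rw [fx a ha, fx b hb]; rw [fx a ha, fy b hb]; rw [fx a ha, fz b hb];
       rw [fy a ha, fx b hb]; rw [fy a ha, fy b hb]; rw [fy a ha, fz b hb];
       rw [fz a ha, fx b hb]; rw [fz a ha, fy b hb]; rw [fz a ha, fz b hb]] <;>
      rw [ha, hb] <;> assumption

section Forward
variable {v1 k1 l1 m1 v2 k2 l2 m2 : ℕ}

lemma fwd_L3 (H1 : ∀ x : V, (G.induce (G.neighborSet x)).IsSRGWith v1 k1 l1 m1) {x y z : V}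
    (hxy : G.Adj x y) (hxz : G.Adj x z) (hyz : G.Adj y z) :
    commonValency G {x, y, z} = l1 := by
  rw [show commonValency G {x, y, z} =
      commonValency G {x, ↑(⟨y, hxy⟩ : ↥(G.neighborSet x)), ↑(⟨z, hxz⟩ : ↥(G.neighborSet x))}
    from rfl, ← aux_C1, Nat.card_eq_fintype_card]
  exact (H1 x).of_adj ⟨y, hxy⟩ ⟨z, hxz⟩ hyz

lemma fwd_L2 (H1 : ∀ x : V, (G.induce (G.neighborSet x)).IsSRGWith v1 k1 l1 m1) {x y z : V}
    (hxy : G.Adj x y) (hxz : G.Adj x z) (hyz : ¬ G.Adj y z)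
    (hne : y ≠ z) : commonValency G {x, y, z} = m1 := by
  rw [show commonValency G {x, y, z} =
      commonValency G {x, ↑(⟨y, hxy⟩ : ↥(G.neighborSet x)), ↑(⟨z, hxz⟩ : ↥(G.neighborSet x))}
    from rfl, ← aux_C1, Nat.card_eq_fintype_card]
  exact (H1 x).of_not_adj (fun h => hne (congrArg Subtype.val h)) hyz

lemma fwd_L1 (H2 : ∀ x : V, (G.induce {y : V | y ≠ x ∧ ¬ G.Adj x y}).IsSRGWith v2 k2 l2 m2) {n k ℓ μ : ℕ} (hsrg : G.IsSRGWith n k ℓ μ) {x y z : V}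
    (hxy : ¬ G.Adj x y) (hxz : ¬ G.Adj x z) (hyx : y ≠ x) (hzx : z ≠ x)
    (hyz : G.Adj y z) : commonValency G {x, y, z} + l2 = ℓ := by
  have h := aux_C2 (G := G) (⟨y, ⟨hyx, hxy⟩⟩ : ↥{w : V | w ≠ x ∧ ¬ G.Adj x w}) ⟨z, ⟨hzx, hxz⟩⟩
  rw [hsrg.of_adj y z hyz, Nat.card_eq_fintype_card] at h
  rw [show ({x, y, z} : Finset V) = {x, ↑(⟨y, ⟨hyx, hxy⟩⟩ : ↥{w : V | w ≠ x ∧ ¬ G.Adj x w}),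
      ↑(⟨z, ⟨hzx, hxz⟩⟩ : ↥{w : V | w ≠ x ∧ ¬ G.Adj x w})} from rfl]
  rw [← h, (H2 x).of_adj ⟨y, ⟨hyx, hxy⟩⟩ ⟨z, ⟨hzx, hxz⟩⟩ hyz]

lemma fwd_L0 (H2 : ∀ x : V, (G.induce {y : V | y ≠ x ∧ ¬ G.Adj x y}).IsSRGWith v2 k2 l2 m2) {n k ℓ μ : ℕ} (hsrg : G.IsSRGWith n k ℓ μ) {x y z : V}
    (hxy : ¬ G.Adj x y) (hxz : ¬ G.Adj x z) (hyx : y ≠ x) (hzx : z ≠ x)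
    (hyz : ¬ G.Adj y z) (hne : y ≠ z) : commonValency G {x, y, z} + m2 = μ := by
  have h := aux_C2 (G := G) (⟨y, ⟨hyx, hxy⟩⟩ : ↥{w : V | w ≠ x ∧ ¬ G.Adj x w}) ⟨z, ⟨hzx, hxz⟩⟩
  rw [hsrg.of_not_adj hne hyz, Nat.card_eq_fintype_card] at h
  have h2 := (H2 x).of_not_adj
    (show (⟨y, ⟨hyx, hxy⟩⟩ : ↥{w : V | w ≠ x ∧ ¬ G.Adj x w}) ≠ ⟨z, ⟨hzx, hxz⟩⟩ from
      fun h' => hne (congrArg Subtype.val h')) hyz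
  rw [show ({x, y, z} : Finset V) = {x, ↑(⟨y, ⟨hyx, hxy⟩⟩ : ↥{w : V | w ≠ x ∧ ¬ G.Adj x w}),
      ↑(⟨z, ⟨hzx, hxz⟩⟩ : ↥{w : V | w ≠ x ∧ ¬ G.Adj x w})} from rfl]
  rw [← h, h2]

end Forward
end Aux

/-- A strongly regular graph is 3-isoregular iff both subconstituents at each
vertex are strongly regular with parameters independent of the vertex. -/
theorem isoregular_three_iff_subconstituents_stronglyRegular {V : Type*} [Fintype V]
    [DecidableEq V] (G : SimpleGraph V) [DecidableRel G.Adj] (v k ℓ μ : ℕ)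
    (hsrg : G.IsSRGWith v k ℓ μ) :
    (∃ v1 k1 l1 m1 v2 k2 l2 m2 : ℕ, ∀ x : V,
        (G.induce (G.neighborSet x)).IsSRGWith v1 k1 l1 m1 ∧
        (G.induce {y : V | y ≠ x ∧ ¬ G.Adj x y}).IsSRGWith v2 k2 l2 m2)
      ↔ IsIsoregular G 3 := by
  constructor
  · rintro ⟨v1, k1, l1, m1, v2, k2, l2, m2, H⟩
    have H1 : ∀ x : V, (G.induce (G.neighborSet x)).IsSRGWith v1 k1 l1 m1 :=
      fun x => (H x).1
    have H2 : ∀ x : V, (G.induce {y : V | y ≠ x ∧ ¬ G.Adj x y}).IsSRGWith v2 k2 l2 m2 :=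
      fun x => (H x).2
    intro S T hS hT hiso
    obtain ⟨φ, hφ⟩ := hiso
    have hST : S.card = T.card := by
      have h := Fintype.card_congr φ
      simpa [Fintype.card_coe] using h
    have hcases : S.card = 0 ∨ S.card = 1 ∨ S.card = 2 ∨ S.card = 3 := by omega
    rcases hcases with h | h | h | h
    · obtain rfl : S = ∅ := Finset.card_eq_zero.mp h
      obtain rfl : T = ∅ := Finset.card_eq_zero.mp (by omega)
      rfl
    · obtain ⟨x, rfl⟩ := Finset.card_eq_one.mp h
      obtain ⟨x', rfl⟩ := Finset.card_eq_one.mp (show T.card = 1 by omega)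
      rw [cv_single, cv_single, hsrg.regular x, hsrg.regular x']
    · obtain ⟨x, y, hxy, rfl⟩ := Finset.card_eq_two.mp h
      have mx : x ∈ ({x, y} : Finset V) := by simp
      have my : y ∈ ({x, y} : Finset V) := by simp
      set a : {w // w ∈ ({x, y} : Finset V)} := ⟨x, mx⟩ with ha
      set b : {w // w ∈ ({x, y} : Finset V)} := ⟨y, my⟩ with hb
      set x' := ((φ a) : V) with hx'
      set y' := ((φ b) : V) with hy'
      have hx'y' : x' ≠ y' := fun hh =>
        hxy (congrArg Subtype.val (φ.injective (Subtype.ext hh)))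
      have hsub : ({x', y'} : Finset V) ⊆ T := by
        intro t ht
        rcases Finset.mem_insert.mp ht with rfl | ht'
        · exact (φ a).2
        · rw [Finset.mem_singleton.mp ht']
          exact (φ b).2
      have hT' : T = {x', y'} := by
        refine (Finset.eq_of_subset_of_card_le hsub ?_).symm
        rw [Finset.card_insert_of_notMem (by simpa using hx'y'), Finset.card_singleton]
        omega
      rw [hT', cv_pair_set, cv_pair_set]
      by_cases hadj : G.Adj x y
      · rw [hsrg.of_adj x y hadj, hsrg.of_adj x' y' ((hφ a b).mp hadj)]
      · rw [hsrg.of_not_adj hxy hadj,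
          hsrg.of_not_adj hx'y' (fun hh => hadj ((hφ a b).mpr hh))]
    · obtain ⟨x, y, z, hxy, hxz, hyz, rfl⟩ := Finset.card_eq_three.mp h
      have mx : x ∈ ({x, y, z} : Finset V) := by simp
      have my : y ∈ ({x, y, z} : Finset V) := by simp
      have mz : z ∈ ({x, y, z} : Finset V) := by simp
      set a : {w // w ∈ ({x, y, z} : Finset V)} := ⟨x, mx⟩ with hha
      set b : {w // w ∈ ({x, y, z} : Finset V)} := ⟨y, my⟩ with hhb
      set c : {w // w ∈ ({x, y, z} : Finset V)} := ⟨z, mz⟩ with hhc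
      set x' := ((φ a) : V) with hx'
      set y' := ((φ b) : V) with hy'
      set z' := ((φ c) : V) with hz'
      have hx'y' : x' ≠ y' := fun hh =>
        hxy (congrArg Subtype.val (φ.injective (Subtype.ext hh)))
      have hx'z' : x' ≠ z' := fun hh =>
        hxz (congrArg Subtype.val (φ.injective (Subtype.ext hh)))
      have hy'z' : y' ≠ z' := fun hh =>
        hyz (congrArg Subtype.val (φ.injective (Subtype.ext hh)))
      have hsub : ({x', y', z'} : Finset V) ⊆ T := by
        intro t ht
        rcases Finset.mem_insert.mp ht with rfl | ht'
        · exact (φ a).2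
        rcases Finset.mem_insert.mp ht' with rfl | ht''
        · exact (φ b).2
        · rw [Finset.mem_singleton.mp ht'']
          exact (φ c).2
      have hT' : T = {x', y', z'} := by
        refine (Finset.eq_of_subset_of_card_le hsub ?_).symm
        rw [triple_card hx'y' hx'z' hy'z']
        omega
      rw [hT']
      have i1 : G.Adj x y ↔ G.Adj x' y' := hφ a b
      have i2 : G.Adj x z ↔ G.Adj x' z' := hφ a c
      have i3 : G.Adj y z ↔ G.Adj y' z' := hφ b c
      by_cases e1 : G.Adj x y <;> by_cases e2 : G.Adj x z <;> by_cases e3 : G.Adj y z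
      · rw [fwd_L3 H1 e1 e2 e3, fwd_L3 H1 (i1.mp e1) (i2.mp e2) (i3.mp e3)]
      · rw [fwd_L2 H1 e1 e2 e3 hyz,
          fwd_L2 H1 (i1.mp e1) (i2.mp e2) (fun hh => e3 (i3.mpr hh)) hy'z']
      · rw [triple_perm1 x y z, triple_perm1 x' y' z']
        rw [fwd_L2 H1 e1.symm e3 e2 hxz,
          fwd_L2 H1 (i1.mp e1).symm (i3.mp e3) (fun hh => e2 (i2.mpr hh)) hx'z']
      · rw [triple_perm2 x y z, triple_perm2 x' y' z']
        have A := fwd_L1 H2 hsrg (fun hh => e2 hh.symm) (fun hh => e3 hh.symm)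
          hxz hyz e1
        have B := fwd_L1 H2 hsrg (fun hh => (fun hh2 => e2 (i2.mpr hh2)) hh.symm)
          (fun hh => (fun hh2 => e3 (i3.mpr hh2)) hh.symm) hx'z' hy'z' (i1.mp e1)
        omega
      · rw [triple_perm2 x y z, triple_perm2 x' y' z']
        rw [fwd_L2 H1 e2.symm e3.symm e1 hxy,
          fwd_L2 H1 (i2.mp e2).symm (i3.mp e3).symm (fun hh => e1 (i1.mpr hh)) hx'y']
      · rw [triple_perm1 x y z, triple_perm1 x' y' z']
        have A := fwd_L1 H2 hsrg (fun hh => e1 hh.symm) e3 hxy hyz.symm e2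
        have B := fwd_L1 H2 hsrg (fun hh => e1 (i1.mpr hh.symm))
          (fun hh => e3 (i3.mpr hh)) hx'y' hy'z'.symm (i2.mp e2)
        omega
      · have A := fwd_L1 H2 hsrg e1 e2 hxy.symm hxz.symm e3
        have B := fwd_L1 H2 hsrg (fun hh => e1 (i1.mpr hh)) (fun hh => e2 (i2.mpr hh))
          hx'y'.symm hx'z'.symm (i3.mp e3)
        omega
      · have A := fwd_L0 H2 hsrg e1 e2 hxy.symm hxz.symm e3 hyz
        have B := fwd_L0 H2 hsrg (fun hh => e1 (i1.mpr hh)) (fun hh => e2 (i2.mpr hh))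
          hx'y'.symm hx'z'.symm (fun hh => e3 (i3.mpr hh)) hy'z'
        omega
  · intro hiso
    obtain ⟨c3, hc3⟩ : ∃ c, ∀ x y z : V, G.Adj x y → G.Adj x z → G.Adj y z →
        commonValency G {x, y, z} = c := by
      by_cases h : ∃ t : V × V × V, G.Adj t.1 t.2.1 ∧ G.Adj t.1 t.2.2 ∧ G.Adj t.2.1 t.2.2
      · obtain ⟨⟨p, q, r⟩, h1, h2, h3⟩ := h
        refine ⟨commonValency G {p, q, r}, fun x y z e1 e2 e3 => ?_⟩
        exact hiso _ _ (triple_card (G.ne_of_adj e1) (G.ne_of_adj e2) (G.ne_of_adj e3)).le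
          (triple_card (G.ne_of_adj h1) (G.ne_of_adj h2) (G.ne_of_adj h3)).le
          (indIso_triple (G.ne_of_adj e1) (G.ne_of_adj e2) (G.ne_of_adj e3)
            (G.ne_of_adj h1) (G.ne_of_adj h2) (G.ne_of_adj h3)
            (iff_of_true e1 h1) (iff_of_true e2 h2) (iff_of_true e3 h3))
      · exact ⟨0, fun x y z e1 e2 e3 => absurd ⟨(x, y, z), e1, e2, e3⟩ h⟩
    obtain ⟨c2, hc2⟩ : ∃ c, ∀ x y z : V, G.Adj x y → G.Adj x z → ¬ G.Adj y z → y ≠ z →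
        commonValency G {x, y, z} = c := by
      by_cases h : ∃ t : V × V × V, G.Adj t.1 t.2.1 ∧ G.Adj t.1 t.2.2 ∧
          ¬ G.Adj t.2.1 t.2.2 ∧ t.2.1 ≠ t.2.2
      · obtain ⟨⟨p, q, r⟩, h1, h2, h3, h4⟩ := h
        refine ⟨commonValency G {p, q, r}, fun x y z e1 e2 e3 e4 => ?_⟩
        exact hiso _ _ (triple_card (G.ne_of_adj e1) (G.ne_of_adj e2) e4).le
          (triple_card (G.ne_of_adj h1) (G.ne_of_adj h2) h4).le
          (indIso_triple (G.ne_of_adj e1) (G.ne_of_adj e2) e4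
            (G.ne_of_adj h1) (G.ne_of_adj h2) h4
            (iff_of_true e1 h1) (iff_of_true e2 h2) (iff_of_false e3 h3))
      · exact ⟨0, fun x y z e1 e2 e3 e4 => absurd ⟨(x, y, z), e1, e2, e3, e4⟩ h⟩
    obtain ⟨c1, hc1⟩ : ∃ c, ∀ x y z : V, ¬ G.Adj x y → ¬ G.Adj x z → x ≠ y → x ≠ z →
        G.Adj y z → commonValency G {x, y, z} = c := by
      by_cases h : ∃ t : V × V × V, ¬ G.Adj t.1 t.2.1 ∧ ¬ G.Adj t.1 t.2.2 ∧
          t.1 ≠ t.2.1 ∧ t.1 ≠ t.2.2 ∧ G.Adj t.2.1 t.2.2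
      · obtain ⟨⟨p, q, r⟩, h1, h2, h3, h4, h5⟩ := h
        refine ⟨commonValency G {p, q, r}, fun x y z e1 e2 e3 e4 e5 => ?_⟩
        exact hiso _ _ (triple_card e3 e4 (G.ne_of_adj e5)).le
          (triple_card h3 h4 (G.ne_of_adj h5)).le
          (indIso_triple e3 e4 (G.ne_of_adj e5) h3 h4 (G.ne_of_adj h5)
            (iff_of_false e1 h1) (iff_of_false e2 h2) (iff_of_true e5 h5))
      · exact ⟨0, fun x y z e1 e2 e3 e4 e5 => absurd ⟨(x, y, z), e1, e2, e3, e4, e5⟩ h⟩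
    obtain ⟨c0, hc0⟩ : ∃ c, ∀ x y z : V, ¬ G.Adj x y → ¬ G.Adj x z → ¬ G.Adj y z →
        x ≠ y → x ≠ z → y ≠ z → commonValency G {x, y, z} = c := by
      by_cases h : ∃ t : V × V × V, ¬ G.Adj t.1 t.2.1 ∧ ¬ G.Adj t.1 t.2.2 ∧
          ¬ G.Adj t.2.1 t.2.2 ∧ t.1 ≠ t.2.1 ∧ t.1 ≠ t.2.2 ∧ t.2.1 ≠ t.2.2
      · obtain ⟨⟨p, q, r⟩, h1, h2, h3, h4, h5, h6⟩ := h
        refine ⟨commonValency G {p, q, r}, fun x y z e1 e2 e3 e4 e5 e6 => ?_⟩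
        exact hiso _ _ (triple_card e4 e5 e6).le (triple_card h4 h5 h6).le
          (indIso_triple e4 e5 e6 h4 h5 h6
            (iff_of_false e1 h1) (iff_of_false e2 h2) (iff_of_false e3 h3))
      · exact ⟨0, fun x y z e1 e2 e3 e4 e5 e6 =>
          absurd ⟨(x, y, z), e1, e2, e3, e4, e5, e6⟩ h⟩
    refine ⟨k, ℓ, c3, c2, v - k - 1, k - μ, ℓ - c1, μ - c0, fun x => ⟨?_, ?_⟩⟩
    · refine ⟨?_, ?_, ?_, ?_⟩
      · exact (SimpleGraph.card_neighborSet_eq_degree G x).trans (hsrg.regular x)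
      · intro a
        rw [aux_degree]
        rw [show {w : V | w ∈ G.neighborSet x ∧ G.Adj ↑a w} =
            {w : V | G.Adj x w ∧ G.Adj ↑a w} from rfl, ← aux_common]
        exact hsrg.of_adj x ↑a a.2
      · intro a b hab
        rw [← Nat.card_eq_fintype_card, aux_C1]
        exact hc3 x ↑a ↑b a.2 b.2 hab
      · intro a b hne hnadj
        rw [← Nat.card_eq_fintype_card, aux_C1]
        exact hc2 x ↑a ↑b a.2 b.2 hnadj (fun hh => hne (Subtype.ext hh))
    · refine ⟨?_, ?_, ?_, ?_⟩
      · have h := aux_V2 (G := G) x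
        rw [hsrg.regular x, hsrg.card] at h
        omega
      · intro a
        have h := aux_D2 (G := G) a
        rw [hsrg.regular ↑a, hsrg.of_not_adj (Ne.symm a.2.1) a.2.2] at h
        omega
      · intro a b hab
        have h := aux_C2 (G := G) a b
        rw [hsrg.of_adj ↑a ↑b hab,
          hc1 x ↑a ↑b a.2.2 b.2.2 (Ne.symm a.2.1) (Ne.symm b.2.1) hab] at h
        rw [← Nat.card_eq_fintype_card]
        omega
      · intro a b hne hnadj
        have hne' : (↑a : V) ≠ ↑b := fun hh => hne (Subtype.ext hh)
        have h := aux_C2 (G := G) a b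
        rw [hsrg.of_not_adj hne' hnadj,
          hc0 x ↑a ↑b a.2.2 b.2.2 hnadj (Ne.symm a.2.1) (Ne.symm b.2.1) hne'] at h
        rw [← Nat.card_eq_fintype_card]
        omega
end

section
/- Let Γ be the point graph of a generalised quadrangle of order (s,t). For vertices x, y, the number of 3-element cliques {a,b,c} with each of a,b,c adjacent to y and none adjacent to x equals t·C(s,3) if x ∼ y, and (t+1)·C(s−1,3) if x ≁ y and x ≠ y. -/
/-- A generalised quadrangle of order `(s, t)`: a partial linear space in which
every line has `s + 1` points, every point is on `t + 1` lines, two distinct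
lines meet in at most one point, and for every point `p` not on a line `l` there
is exactly one point of `l` collinear with `p`. -/
structure GenQuadrangle (P : Type*) [Fintype P] [DecidableEq P] (s t : ℕ) where
  lines : Finset (Finset P)
  line_card : ∀ l ∈ lines, l.card = s + 1
  point_lines : ∀ p : P, (lines.filter fun l => p ∈ l).card = t + 1
  lines_meet : ∀ l ∈ lines, ∀ m ∈ lines, l ≠ m → (l ∩ m).card ≤ 1
  gq : ∀ l ∈ lines, ∀ p : P, p ∉ l → ∃! q, q ∈ l ∧ ∃ m ∈ lines, p ∈ m ∧ q ∈ m

variable {P : Type*} [Fintype P] [DecidableEq P] {s t : ℕ}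

/-- The point graph of a generalised quadrangle: points are adjacent iff they are
distinct and collinear. -/
def GenQuadrangle.pointGraph (Q : GenQuadrangle P s t) : SimpleGraph P where
  Adj x y := x ≠ y ∧ ∃ l ∈ Q.lines, x ∈ l ∧ y ∈ l
  symm := by
    constructor
    rintro x y ⟨h, l, hl, hx, hy⟩
    exact ⟨h.symm, l, hl, hy, hx⟩
  loopless := by
    constructor
    rintro x ⟨h, -⟩
    exact h rfl

instance (Q : GenQuadrangle P s t) : DecidableRel Q.pointGraph.Adj :=
  fun x y => inferInstanceAs (Decidable (x ≠ y ∧ ∃ l ∈ Q.lines, x ∈ l ∧ y ∈ l))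

/-! Two points determine at most one line, and a point off a line is collinear with exactly one
of its points. Hence a clique of size at least two lies on a unique line, so the cliques in the
neighbourhood of `y` are the subsets of the lines through `y`. On such a line `l`, the points
not collinear with `x` are: none if `x ∈ l`; all but the projection of `x` otherwise, and that
projection is `y` itself exactly when `x ∼ y`. So for `x ∼ y` the line `xy` contributes nothing
and each of the other `t` lines through `y` offers `s` points, while for `x ≁ y` each of the
`t + 1` lines through `y` offers `s - 1` points. -/

namespace GenQuadrangle

variable (Q : GenQuadrangle P s t)

lemma eq_of_subset_of_subset {l m S : Finset P} (hl : l ∈ Q.lines) (hm : m ∈ Q.lines)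
    (hS : 1 < S.card) (hSl : S ⊆ l) (hSm : S ⊆ m) : l = m := by
  by_contra hlm
  have := Finset.card_le_card (Finset.subset_inter hSl hSm)
  have := Q.lines_meet l hl m hm hlm
  omega

lemma adj_of_mem_line {l : Finset P} (hl : l ∈ Q.lines) {a b : P} (hab : a ≠ b)
    (ha : a ∈ l) (hb : b ∈ l) : Q.pointGraph.Adj a b :=
  ⟨hab, l, hl, ha, hb⟩

lemma eq_of_adj_of_adj {l : Finset P} (hl : l ∈ Q.lines) {p a b : P} (hp : p ∉ l)
    (ha : a ∈ l) (hb : b ∈ l) (hpa : Q.pointGraph.Adj p a) (hpb : Q.pointGraph.Adj p b) :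
    a = b :=
  (Q.gq l hl p hp).unique ⟨ha, hpa.2⟩ ⟨hb, hpb.2⟩

lemma mem_of_adj_of_adj {l : Finset P} (hl : l ∈ Q.lines) {p a b : P} (hab : a ≠ b)
    (ha : a ∈ l) (hb : b ∈ l) (hpa : Q.pointGraph.Adj p a) (hpb : Q.pointGraph.Adj p b) :
    p ∈ l := by
  by_contra hp
  exact hab (Q.eq_of_adj_of_adj hl hp ha hb hpa hpb)

lemma exists_adj_of_notMem {l : Finset P} (hl : l ∈ Q.lines) {p : P} (hp : p ∉ l) :
    ∃ q ∈ l, Q.pointGraph.Adj p q := by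
  obtain ⟨q, ⟨hq, hpq⟩, -⟩ := Q.gq l hl p hp
  exact ⟨q, hq, fun h => hp (h ▸ hq), hpq⟩

lemma exists_line_superset_of_isClique {S : Finset P}
    (hS : Q.pointGraph.IsClique (S : Set P)) (hcard : 1 < S.card) :
    ∃ l ∈ Q.lines, S ⊆ l := by
  obtain ⟨a, ha, b, hb, hab⟩ := Finset.one_lt_card.mp hcard
  obtain ⟨-, l, hl, hal, hbl⟩ := hS ha hb hab
  refine ⟨l, hl, fun c hc => ?_⟩
  by_cases hca : c = a
  · exact hca ▸ hal
  by_cases hcb : c = b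
  · exact hcb ▸ hbl
  exact Q.mem_of_adj_of_adj hl hab hal hbl (hS hc ha hca) (hS hc hb hcb)

lemma setOf_isNClique_of_forall_adj_eq_biUnion (y : P) (p : P → Prop) [DecidablePred p]
    {k : ℕ} (hk : 2 ≤ k) :
    {S : Finset P | Q.pointGraph.IsNClique k S ∧ ∀ a ∈ S, Q.pointGraph.Adj y a ∧ p a} =
      ↑((Q.lines.filter (y ∈ ·)).biUnion fun l => ((l.erase y).filter p).powersetCard k) := by
  ext S
  simp only [Set.mem_ofPred_eq, Finset.coe_biUnion, Finset.coe_filter, Finset.mem_coe,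
    Finset.mem_powersetCard, Set.mem_iUnion, exists_prop, SimpleGraph.isNClique_iff]
  constructor
  · rintro ⟨⟨hclique, rfl⟩, hy⟩
    have hinsert : Q.pointGraph.IsClique (insert y S : Finset P) := by
      rw [Finset.coe_insert, SimpleGraph.isClique_insert]
      exact ⟨hclique, fun a ha _ => (hy a ha).1⟩
    obtain ⟨l, hl, hyS⟩ := Q.exists_line_superset_of_isClique hinsert
      ((by omega : 1 < S.card).trans_le (Finset.card_le_card (Finset.subset_insert y S)))
    rw [Finset.insert_subset_iff] at hyS
    refine ⟨l, ⟨hl, hyS.1⟩, fun a ha => ?_, rfl⟩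
    exact Finset.mem_filter.mpr ⟨Finset.mem_erase.mpr ⟨(hy a ha).1.ne', hyS.2 ha⟩, (hy a ha).2⟩
  · rintro ⟨l, ⟨hl, hyl⟩, hSl, rfl⟩
    have hmem : ∀ a ∈ S, a ≠ y ∧ a ∈ l := fun a ha =>
      Finset.mem_erase.mp (Finset.mem_filter.mp (hSl ha)).1
    refine ⟨⟨fun a ha b hb hab => Q.adj_of_mem_line hl hab (hmem a ha).2 (hmem b hb).2, rfl⟩,
      fun a ha => ⟨Q.adj_of_mem_line hl (hmem a ha).1.symm hyl (hmem a ha).2,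
        (Finset.mem_filter.mp (hSl ha)).2⟩⟩

lemma ncard_isNClique_of_forall_adj_eq_sum (y : P) (p : P → Prop) [DecidablePred p] {k : ℕ}
    (hk : 2 ≤ k) :
    {S : Finset P | Q.pointGraph.IsNClique k S ∧ ∀ a ∈ S, Q.pointGraph.Adj y a ∧ p a}.ncard =
      ∑ l ∈ Q.lines.filter (y ∈ ·), ((l.erase y).filter p).card.choose k := by
  rw [Q.setOf_isNClique_of_forall_adj_eq_biUnion y p hk, Set.ncard_coe_finset,
    Finset.card_biUnion]
  · exact Finset.sum_congr rfl fun l _ => Finset.card_powersetCard k _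
  · intro l hl m hm hlm
    refine Finset.disjoint_left.mpr fun S hSl hSm => hlm ?_
    rw [Finset.mem_powersetCard] at hSl hSm
    have hsub : ∀ {l : Finset P}, S ⊆ (l.erase y).filter p → S ⊆ l := fun h =>
      h.trans ((Finset.filter_subset _ _).trans (Finset.erase_subset _ _))
    exact Q.eq_of_subset_of_subset (Finset.mem_filter.mp hl).1 (Finset.mem_filter.mp hm).1
      (by omega) (hsub hSl.1) (hsub hSm.1)

lemma filter_not_adj_eq_empty {l : Finset P} (hl : l ∈ Q.lines) {x : P} (hx : x ∈ l) :
    l.filter (fun a => a ≠ x ∧ ¬ Q.pointGraph.Adj x a) = ∅ :=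
  Finset.filter_eq_empty_iff.mpr fun _ ha ⟨hax, hxa⟩ =>
    hxa (Q.adj_of_mem_line hl hax.symm hx ha)

lemma filter_not_adj_eq_erase {l : Finset P} (hl : l ∈ Q.lines) {x q : P} (hx : x ∉ l)
    (hq : q ∈ l) (hxq : Q.pointGraph.Adj x q) :
    l.filter (fun a => a ≠ x ∧ ¬ Q.pointGraph.Adj x a) = l.erase q := by
  ext a
  simp only [Finset.mem_filter, Finset.mem_erase]
  constructor
  · rintro ⟨hal, -, hxa⟩
    exact ⟨fun haq => hxa (haq ▸ hxq), hal⟩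
  · rintro ⟨haq, hal⟩
    exact ⟨hal, fun hax => hx (hax ▸ hal),
      fun hxa => haq (Q.eq_of_adj_of_adj hl hx hal hq hxa hxq)⟩

lemma sum_choose_card_not_adj_of_adj {x y : P} (hxy : Q.pointGraph.Adj x y) {k : ℕ}
    (hk : 0 < k) :
    ∑ l ∈ Q.lines.filter (y ∈ ·),
        ((l.erase y).filter fun a => a ≠ x ∧ ¬ Q.pointGraph.Adj x a).card.choose k =
      t * s.choose k := by
  obtain ⟨hne, m, hm, hxm, hym⟩ := hxy
  have hmy : m ∈ Q.lines.filter (y ∈ ·) := Finset.mem_filter.mpr ⟨hm, hym⟩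
  rw [← Finset.sum_erase (a := m) _ ?m_zero, Finset.sum_eq_card_nsmul (b := s.choose k),
    Finset.card_erase_of_mem hmy, Q.point_lines y, smul_eq_mul, Nat.add_sub_cancel]
  case m_zero =>
    rw [Finset.filter_erase, Q.filter_not_adj_eq_empty hm hxm]
    exact Nat.choose_eq_zero_of_lt (by simpa using hk)
  intro l hl
  simp only [Finset.mem_erase, Finset.mem_filter] at hl
  obtain ⟨hlm, hl, hyl⟩ := hl
  have hxl : x ∉ l := fun hxl => hlm (Q.eq_of_subset_of_subset (S := {x, y}) hl hm
    (by simp [Finset.card_pair hne]) (by simp [Finset.insert_subset_iff, hxl, hyl])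
    (by simp [Finset.insert_subset_iff, hxm, hym]))
  rw [Finset.filter_erase, Q.filter_not_adj_eq_erase hl hxl hyl ⟨hne, m, hm, hxm, hym⟩,
    Finset.erase_idem, Finset.card_erase_of_mem hyl, Q.line_card l hl, Nat.add_sub_cancel]

lemma sum_choose_card_not_adj_of_not_adj {x y : P} (hne : x ≠ y)
    (hxy : ¬ Q.pointGraph.Adj x y) (k : ℕ) :
    ∑ l ∈ Q.lines.filter (y ∈ ·),
        ((l.erase y).filter fun a => a ≠ x ∧ ¬ Q.pointGraph.Adj x a).card.choose k =
      (t + 1) * (s - 1).choose k := by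
  rw [Finset.sum_eq_card_nsmul (b := (s - 1).choose k), Q.point_lines y, smul_eq_mul]
  intro l hl
  obtain ⟨hl, hyl⟩ := Finset.mem_filter.mp hl
  have hxl : x ∉ l := fun hxl => hxy (Q.adj_of_mem_line hl hne hxl hyl)
  obtain ⟨q, hql, hxq⟩ := Q.exists_adj_of_notMem hl hxl
  have hqy : q ≠ y := by
    rintro rfl
    exact hxy hxq
  rw [Finset.filter_erase, Q.filter_not_adj_eq_erase hl hxl hql hxq,
    Finset.card_erase_of_mem (Finset.mem_erase.mpr ⟨hqy.symm, hyl⟩),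
    Finset.card_erase_of_mem hql, Q.line_card l hl, Nat.add_sub_cancel]

end GenQuadrangle

/-- Type 3a count for the 5-vertex condition: 3-element cliques all of whose
elements are adjacent to `y`, none adjacent to `x` (and distinct from `x`). -/
theorem type3a_count (Q : GenQuadrangle P s t) (x y : P) :
    (Q.pointGraph.Adj x y →
      Set.ncard {S : Finset P | S.card = 3 ∧
        (∀ a ∈ S, a ≠ x ∧ Q.pointGraph.Adj y a ∧ ¬ Q.pointGraph.Adj x a) ∧
        (∀ a ∈ S, ∀ b ∈ S, a ≠ b → Q.pointGraph.Adj a b)} = t * s.choose 3) ∧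
    (x ≠ y → ¬ Q.pointGraph.Adj x y →
      Set.ncard {S : Finset P | S.card = 3 ∧
        (∀ a ∈ S, a ≠ x ∧ Q.pointGraph.Adj y a ∧ ¬ Q.pointGraph.Adj x a) ∧
        (∀ a ∈ S, ∀ b ∈ S, a ≠ b → Q.pointGraph.Adj a b)} =
        (t + 1) * (s - 1).choose 3) := by
  have hset : {S : Finset P | S.card = 3 ∧
        (∀ a ∈ S, a ≠ x ∧ Q.pointGraph.Adj y a ∧ ¬ Q.pointGraph.Adj x a) ∧
        (∀ a ∈ S, ∀ b ∈ S, a ≠ b → Q.pointGraph.Adj a b)} =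
      {S : Finset P | Q.pointGraph.IsNClique 3 S ∧
        ∀ a ∈ S, Q.pointGraph.Adj y a ∧ (a ≠ x ∧ ¬ Q.pointGraph.Adj x a)} := by
    ext S
    simp only [Set.mem_ofPred_eq, SimpleGraph.isNClique_iff, SimpleGraph.isClique_iff,
      Set.Pairwise, Finset.mem_coe]
    grind
  rw [hset, Q.ncard_isNClique_of_forall_adj_eq_sum y _ (by norm_num)]
  exact ⟨fun hxy => Q.sum_choose_card_not_adj_of_adj hxy (by norm_num),
    fun hne hxy => Q.sum_choose_card_not_adj_of_not_adj hne hxy 3⟩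
end
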